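/- The subgroup commutativity degree of the alternating group $A_4$ equals $16/25$. -/

import Mathlib

open scoped Pointwise

noncomputable def sd (G : Type*) [Group G] : ℚ :=
  (Nat.card {pr : Subgroup G × Subgroup G //
      (pr.1 : Set G) * (pr.2 : Set G) = (pr.2 : Set G) * (pr.1 : Set G)} : ℚ) /
    (Nat.card (Subgroup G) : ℚ) ^ 2

/-! Two subgroups `H, K` permute exactly when `HK` is a subgroup. In `A₄` (subgroups: the trivial
one, three of order 2, four of order 3, `V₄`, `A₄`) this fails only for a subgroup of order 2 with
one of order 3 (`|HK| = 6`, and `A₄` has no subgroup of order 6) and for two distinct subgroups of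
order 3 (`|HK| = 9`), i.e. for `24 + 12 = 36` of the `100` ordered pairs.

The count is certified by `decide`, after recording subgroups of a finite group by their carriers
as finsets, so that both sets counted in `sd G` become explicit finsets. -/

open Finset

section SubgroupCarriers

variable {G : Type*} [Group G]

noncomputable def Subgroup.carrierFinset [Finite G] (H : Subgroup G) : Finset G :=
  (Set.toFinite (H : Set G)).toFinset

@[simp]
lemma Subgroup.coe_carrierFinset [Finite G] (H : Subgroup G) : (H.carrierFinset : Set G) = H :=
  Set.Finite.coe_toFinset _

@[simp]
lemma Subgroup.mem_carrierFinset [Finite G] {H : Subgroup G} {x : G} :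
    x ∈ H.carrierFinset ↔ x ∈ H :=
  Set.Finite.mem_toFinset _

def IsSubgroupCarrier (s : Finset G) : Prop :=
  (1 : G) ∈ s ∧ (∀ a ∈ s, a⁻¹ ∈ s) ∧ ∀ a ∈ s, ∀ b ∈ s, a * b ∈ s

def IsSubgroupCarrier.toSubgroup {s : Finset G} (hs : IsSubgroupCarrier s) : Subgroup G where
  carrier := s
  one_mem' := hs.1
  inv_mem' := hs.2.1 _
  mul_mem' {a b} ha hb := hs.2.2 a ha b hb

@[simp]
lemma IsSubgroupCarrier.coe_toSubgroup {s : Finset G} (hs : IsSubgroupCarrier s) :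
    (hs.toSubgroup : Set G) = s :=
  rfl

variable [Fintype G] [DecidableEq G]

instance : DecidablePred (IsSubgroupCarrier (G := G)) := fun _ =>
  inferInstanceAs (Decidable (_ ∧ _ ∧ _))

variable (G) in
def subgroupCarriers : Finset (Finset G) :=
  univ.filter IsSubgroupCarrier

variable (G) in
def permutingPairs : Finset (Finset G × Finset G) :=
  (subgroupCarriers G ×ˢ subgroupCarriers G).filter fun q => q.1 * q.2 = q.2 * q.1

lemma Subgroup.carrierFinset_mem_subgroupCarriers (H : Subgroup G) :
    H.carrierFinset ∈ subgroupCarriers G := by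
  simp only [subgroupCarriers, mem_filter, mem_univ, true_and, IsSubgroupCarrier,
    Subgroup.mem_carrierFinset]
  exact ⟨H.one_mem, fun _ => H.inv_mem, fun _ ha _ hb => H.mul_mem ha hb⟩

lemma IsSubgroupCarrier.of_mem_subgroupCarriers {s : Finset G} (hs : s ∈ subgroupCarriers G) :
    IsSubgroupCarrier s :=
  (mem_filter.mp hs).2

noncomputable def subgroupEquivSubgroupCarriers : Subgroup G ≃ subgroupCarriers G where
  toFun H := ⟨H.carrierFinset, H.carrierFinset_mem_subgroupCarriers⟩
  invFun s := (IsSubgroupCarrier.of_mem_subgroupCarriers s.2).toSubgroup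
  left_inv H := SetLike.coe_injective (by simp)
  right_inv s := Subtype.ext (coe_injective (by simp))

lemma Subgroup.permutes_iff_carrierFinset (H K : Subgroup G) :
    (H : Set G) * K = K * H ↔
      H.carrierFinset * K.carrierFinset = K.carrierFinset * H.carrierFinset := by
  rw [← coe_inj, Finset.coe_mul, Finset.coe_mul, H.coe_carrierFinset, K.coe_carrierFinset]

noncomputable def permutingSubgroupPairsEquiv :
    {pr : Subgroup G × Subgroup G // (pr.1 : Set G) * pr.2 = pr.2 * pr.1} ≃
      permutingPairs G where
  toFun pr := ⟨(pr.1.1.carrierFinset, pr.1.2.carrierFinset), mem_filter.mpr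
    ⟨mem_product.mpr ⟨pr.1.1.carrierFinset_mem_subgroupCarriers,
      pr.1.2.carrierFinset_mem_subgroupCarriers⟩,
      (Subgroup.permutes_iff_carrierFinset _ _).mp pr.2⟩⟩
  invFun q :=
    have hq := mem_filter.mp q.2
    have hq₁ := mem_product.mp hq.1
    ⟨((IsSubgroupCarrier.of_mem_subgroupCarriers hq₁.1).toSubgroup,
      (IsSubgroupCarrier.of_mem_subgroupCarriers hq₁.2).toSubgroup), by
        simpa only [IsSubgroupCarrier.coe_toSubgroup, ← Finset.coe_mul, coe_inj] using hq.2⟩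
  left_inv pr := Subtype.ext (Prod.ext (SetLike.coe_injective (by simp))
    (SetLike.coe_injective (by simp)))
  right_inv q := Subtype.ext (Prod.ext (coe_injective (by simp)) (coe_injective (by simp)))

variable (G) in
theorem sd_eq_card_permutingPairs_div :
    sd G = #(permutingPairs G) / (#(subgroupCarriers G) : ℚ) ^ 2 := by
  rw [sd, Nat.card_congr permutingSubgroupPairsEquiv, Nat.card_congr subgroupEquivSubgroupCarriers,
    Nat.card_eq_fintype_card, Nat.card_eq_fintype_card, Fintype.card_coe, Fintype.card_coe]

end SubgroupCarriers

set_option maxHeartbeats 10000000 in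
set_option maxRecDepth 1000000 in
lemma card_subgroupCarriers_alternatingGroup_four :
    #(subgroupCarriers (alternatingGroup (Fin 4))) = 10 := by
  decide

set_option maxHeartbeats 10000000 in
set_option maxRecDepth 1000000 in
lemma card_permutingPairs_alternatingGroup_four :
    #(permutingPairs (alternatingGroup (Fin 4))) = 64 := by
  decide

theorem sd_alternatingGroup_four : sd (alternatingGroup (Fin 4)) = 16 / 25 := by
  rw [sd_eq_card_permutingPairs_div, card_permutingPairs_alternatingGroup_four,
    card_subgroupCarriers_alternatingGroup_four]
  norm_num
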